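/- arXiv:2207.06365 — 5 statements merged into one kernel-verified Lean document; each statement's English description precedes it below -/
import Mathlib

section
/- Let k, t ≥ 2 be coprime integers and let 1 ≤ r ≤ t − k. Then for all sufficiently large n, D_k^×(r,t;n) > D_k^×(r+k,t;n). -/
open scoped Real

/-- `Dkx k t r n` is the number of parts congruent to `r` mod `t`, counted with
multiplicity, among all partitions of `n` into parts not divisible by `k`. -/
noncomputable def Dkx (k t r n : ℕ) : ℕ :=
  ∑ p : n.Partition,
    if ∀ i ∈ p.parts, ¬ k ∣ i then (p.parts.filter (fun i => i % t = r % t)).card else 0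

open Finset


noncomputable def goodP (k n : ℕ) : Finset n.Partition :=
  Finset.univ.filter (fun p => ∀ i ∈ p.parts, ¬ k ∣ i)

noncomputable def bk (k n : ℕ) : ℕ := (goodP k n).card

lemma count_mul_le_sum (s : Multiset ℕ) (m : ℕ) : s.count m * m ≤ s.sum := by
  have h : Multiset.replicate (s.count m) m ≤ s := Multiset.le_count_iff_replicate_le.1 le_rfl
  have h2 : s - Multiset.replicate (s.count m) m + Multiset.replicate (s.count m) m = s :=
    tsub_add_cancel_of_le h
  have := congrArg Multiset.sum h2
  rw [Multiset.sum_add, Multiset.sum_replicate, smul_eq_mul] at this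
  omega

lemma mem_goodP {k n : ℕ} {p : n.Partition} : p ∈ goodP k n ↔ ∀ i ∈ p.parts, ¬ k ∣ i := by
  simp [goodP]

/-- card of good partitions of n with at least j copies of m equals bk (n - j*m) -/
lemma card_count_ge (k m j n : ℕ) (hm : 0 < m) (hkm : ¬ k ∣ m) (hjm : j * m ≤ n) :
    ((goodP k n).filter (fun p => j ≤ p.parts.count m)).card = bk k (n - j * m) := by
  classical
  apply Finset.card_bij' (i := fun p hp =>
    (⟨p.parts - Multiset.replicate j m, fun {i} hi =>
        p.parts_pos (Multiset.mem_of_le (Multiset.sub_le_self _ _) hi), by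
        have hle : Multiset.replicate j m ≤ p.parts :=
          Multiset.le_count_iff_replicate_le.1 (Finset.mem_filter.1 hp).2
        have h2 : (p.parts - Multiset.replicate j m) + Multiset.replicate j m = p.parts :=
          tsub_add_cancel_of_le hle
        have := congrArg Multiset.sum h2
        rw [Multiset.sum_add, Multiset.sum_replicate, smul_eq_mul, p.parts_sum] at this
        omega⟩ : Nat.Partition (n - j * m)))
    (j := fun q _ =>
    (⟨q.parts + Multiset.replicate j m, fun {i} hi => by
        rcases Multiset.mem_add.1 hi with h | h
        · exact q.parts_pos h
        · rw [Multiset.eq_of_mem_replicate h]; exact hm, by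
        rw [Multiset.sum_add, q.parts_sum, Multiset.sum_replicate, smul_eq_mul]
        omega⟩ : Nat.Partition n))
  · intro p hp
    have hle : Multiset.replicate j m ≤ p.parts :=
      Multiset.le_count_iff_replicate_le.1 (Finset.mem_filter.1 hp).2
    apply Nat.Partition.ext
    exact tsub_add_cancel_of_le hle
  · intro q hq
    apply Nat.Partition.ext
    exact add_tsub_cancel_right _ _
  · intro p hp
    rw [mem_goodP]
    intro i hi
    exact mem_goodP.1 (Finset.mem_filter.1 hp).1 i
      (Multiset.mem_of_le (Multiset.sub_le_self _ _) hi)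
  · intro q hq
    rw [Finset.mem_filter, mem_goodP]
    refine ⟨fun i hi => ?_, ?_⟩
    · rcases Multiset.mem_add.1 hi with h | h
      · exact mem_goodP.1 hq i h
      · rw [Multiset.eq_of_mem_replicate h]; exact hkm
    · simp [Multiset.count_add, Multiset.count_replicate]

lemma sum_count_eq (k m n : ℕ) (hm : 0 < m) (hkm : ¬ k ∣ m) :
    ∑ p ∈ goodP k n, p.parts.count m
      = ∑ j ∈ Icc 1 n, if j * m ≤ n then bk k (n - j * m) else 0 := by
  classical
  have key : ∀ p ∈ goodP k n, p.parts.count m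
      = ∑ j ∈ Icc 1 n, if j ≤ p.parts.count m then 1 else 0 := by
    intro p _
    have hc : p.parts.count m ≤ n := by
      have := count_mul_le_sum p.parts m
      rw [p.parts_sum] at this
      nlinarith
    have h1 : ∑ j ∈ Icc 1 n, (if j ≤ p.parts.count m then 1 else 0)
        = ((Icc 1 n).filter (fun j => j ≤ p.parts.count m)).card :=
      (Finset.card_filter _ _).symm
    have h2 : (Icc 1 n).filter (fun j => j ≤ p.parts.count m) = Icc 1 (p.parts.count m) := by
      ext j
      simp only [Finset.mem_filter, Finset.mem_Icc]
      omega
    rw [h1, h2, Nat.card_Icc]; omega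
  rw [Finset.sum_congr rfl key, Finset.sum_comm]
  refine Finset.sum_congr rfl fun j hj => ?_
  by_cases hjm : j * m ≤ n
  · rw [if_pos hjm, ← card_count_ge k m j n hm hkm hjm, Finset.card_filter]
  · rw [if_neg hjm]
    apply Finset.sum_eq_zero
    intro p hp
    rw [if_neg]
    intro hle
    have := count_mul_le_sum p.parts m
    rw [p.parts_sum] at this
    have : j * m ≤ p.parts.count m * m := Nat.mul_le_mul_right m hle
    omega

lemma multiset_filter_card (s : Multiset ℕ) (P : ℕ → Prop) [DecidablePred P] (n : ℕ)
    (hs : ∀ x ∈ s, x < n + 1) :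
    (s.filter P).card = ∑ m ∈ range (n + 1), if P m then s.count m else 0 := by
  classical
  rw [← Multiset.toFinset_sum_count_eq (s.filter P)]
  rw [Finset.sum_subset (s₁ := (s.filter P).toFinset) (s₂ := range (n+1))]
  · refine Finset.sum_congr rfl fun m _ => ?_
    rw [Multiset.count_filter]
  · intro x hx
    rw [Multiset.mem_toFinset, Multiset.mem_filter] at hx
    exact Finset.mem_range.2 (hs x hx.1)
  · intro x _ hx
    rw [Multiset.mem_toFinset] at hx
    exact Multiset.count_eq_zero.2 hx

lemma Dkx_eq (k t r n : ℕ) :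
    Dkx k t r n = ∑ m ∈ range (n + 1),
      if m % t = r % t then ∑ p ∈ goodP k n, p.parts.count m else 0 := by
  classical
  have h1 : Dkx k t r n = ∑ p ∈ goodP k n, (p.parts.filter (fun i => i % t = r % t)).card := by
    rw [Dkx, goodP, Finset.sum_filter]
  rw [h1]
  have h2 : ∀ p ∈ goodP k n, (p.parts.filter (fun i => i % t = r % t)).card
      = ∑ m ∈ range (n + 1), if m % t = r % t then p.parts.count m else 0 := by
    intro p _
    apply multiset_filter_card
    intro x hx
    have : x ≤ p.parts.sum := Multiset.le_sum_of_mem hx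
    rw [p.parts_sum] at this
    omega
  rw [Finset.sum_congr rfl h2, Finset.sum_comm]
  refine Finset.sum_congr rfl fun m _ => ?_
  by_cases hmt : m % t = r % t
  · simp [hmt]
  · simp [hmt]

lemma Dkx_eq_F (k t r n : ℕ) (hk : 2 ≤ k) :
    Dkx k t r n = ∑ m ∈ range (n + 1), ∑ j ∈ Icc 1 n,
      if (m % t = r % t ∧ 1 ≤ m ∧ ¬ k ∣ m ∧ j * m ≤ n) then bk k (n - j * m) else 0 := by
  classical
  rw [Dkx_eq]
  refine Finset.sum_congr rfl fun m _ => ?_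
  by_cases hmt : m % t = r % t
  · rw [if_pos hmt]
    by_cases hm : 1 ≤ m
    · by_cases hkm : ¬ k ∣ m
      · rw [sum_count_eq k m n hm hkm]
        refine Finset.sum_congr rfl fun j _ => ?_
        by_cases hjm : j * m ≤ n
        · rw [if_pos hjm, if_pos ⟨hmt, hm, hkm, hjm⟩]
        · rw [if_neg hjm, if_neg (by tauto)]
      · push_neg at hkm
        have hz : ∀ p ∈ goodP k n, p.parts.count m = 0 := by
          intro p hp
          exact Multiset.count_eq_zero.2 fun hmem => mem_goodP.1 hp m hmem hkm
        rw [Finset.sum_congr rfl hz]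
        simp only [Finset.sum_const_zero]
        symm; apply Finset.sum_eq_zero; intro j _
        rw [if_neg (by tauto)]
    · have hm0 : m = 0 := by omega
      subst hm0
      have hz : ∀ p ∈ goodP k n, p.parts.count 0 = 0 := by
        intro p _
        exact Multiset.count_eq_zero.2 fun hmem => absurd (p.parts_pos hmem) (by omega)
      rw [Finset.sum_congr rfl hz]
      simp only [Finset.sum_const_zero]
      symm; apply Finset.sum_eq_zero; intro j _
      rw [if_neg (by omega)]
  · rw [if_neg hmt]
    symm; apply Finset.sum_eq_zero; intro j _
    rw [if_neg (by tauto)]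

lemma not_dvd_one_of (k : ℕ) (hk : 2 ≤ k) : ¬ k ∣ 1 := by
  intro h; have := Nat.le_of_dvd one_pos h; omega

lemma bk_add_le (k a c : ℕ) (hk : 2 ≤ k) : bk k a ≤ bk k (a + c) := by
  classical
  have h := card_count_ge k 1 c (a + c) one_pos (not_dvd_one_of k hk) (by omega)
  have h2 : a + c - c * 1 = a := by omega
  rw [h2] at h
  rw [← h]
  exact Finset.card_le_card (Finset.filter_subset _ _)

lemma bk_mono (k : ℕ) (hk : 2 ≤ k) {a b : ℕ} (hab : a ≤ b) : bk k a ≤ bk k b := by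
  have := bk_add_le k a (b - a) hk
  rwa [Nat.add_sub_cancel' hab] at this

lemma bk_lt (k a : ℕ) (hk : 2 ≤ k) (ha : 1 ≤ a) : bk k a < bk k (a + 2) := by
  classical
  have h := card_count_ge k 1 2 (a + 2) one_pos (not_dvd_one_of k hk) (by omega)
  have h2 : a + 2 - 2 * 1 = a := by omega
  rw [h2] at h
  rw [← h]
  apply Finset.card_lt_card
  rw [Finset.ssubset_iff_of_subset (Finset.filter_subset _ _)]
  by_cases hd : k ∣ (a + 2)
  · refine ⟨⟨{a + 1, 1}, ?_, ?_⟩, ?_, ?_⟩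
    · intro i hi
      rcases Multiset.mem_cons.1 hi with h | h
      · omega
      · rcases Multiset.mem_singleton.1 h with rfl; omega
    · simp
    · rw [mem_goodP]
      intro i hi
      simp only [Multiset.insert_eq_cons, Multiset.mem_cons, Multiset.mem_singleton] at hi
      rcases hi with h | h
      · subst h
        intro hdvd
        have h1 : k ∣ 1 := by
          have := Nat.dvd_sub hd hdvd
          simpa using this
        exact not_dvd_one_of k hk h1
      · rcases h with rfl
        exact not_dvd_one_of k hk
    · intro hmem
      have hc := Finset.mem_filter.1 hmem |>.2
      simp only at hc
      have : Multiset.count 1 ({a + 1, 1} : Multiset ℕ) = 1 := by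
        rw [Multiset.insert_eq_cons, Multiset.count_cons]
        simp [Multiset.count_singleton]
        omega
      omega
  · refine ⟨⟨{a + 2}, ?_, ?_⟩, ?_, ?_⟩
    · intro i hi
      rcases Multiset.mem_singleton.1 hi with rfl; omega
    · simp
    · rw [mem_goodP]
      intro i hi
      rcases Multiset.mem_singleton.1 hi with rfl
      exact hd
    · intro hmem
      have hc := Finset.mem_filter.1 hmem |>.2
      simp only at hc
      have : Multiset.count 1 ({a + 2} : Multiset ℕ) = 0 := by
        rw [Multiset.count_singleton]
        simp
      omega

lemma bk_pos (k x : ℕ) (hk : 2 ≤ k) : 0 < bk k x := by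
  have h0 : 0 < bk k 0 := by
    apply Finset.card_pos.2
    exact ⟨⟨0, fun {i} hi => absurd hi (by simp), by simp⟩, mem_goodP.2 (by simp)⟩
  calc 0 < bk k 0 := h0
    _ ≤ bk k x := bk_mono k hk (Nat.zero_le x)

lemma bk_lt_add (k x c : ℕ) (hk : 2 ≤ k) (hx : 1 ≤ x) (hc : 2 ≤ c) :
    bk k x < bk k (x + c) := by
  calc bk k x < bk k (x + 2) := bk_lt k x hk hx
    _ ≤ bk k (x + c) := bk_mono k hk (by omega)

lemma ge_of_modcond (t rk m : ℕ) (hrk1 : 1 ≤ rk) (hrkt : rk ≤ t) (ht : 1 ≤ t)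
    (hm1 : 1 ≤ m) (hcond : m % t = rk % t) : rk ≤ m := by
  rcases Nat.lt_or_ge rk t with h | h
  · rw [Nat.mod_eq_of_lt h] at hcond
    have := Nat.mod_le m t
    omega
  · have hrkeq : rk = t := by omega
    subst hrkeq
    rw [Nat.mod_self] at hcond
    have := Nat.le_of_dvd (by omega) (Nat.dvd_of_mod_eq_zero hcond)
    omega

theorem stmt2 (k t r : ℕ) (hk : 2 ≤ k) (ht : 2 ≤ t) (hcop : Nat.Coprime k t)
    (hr1 : 1 ≤ r) (hrtk : r ≤ t - k) :
    ∃ N : ℕ, ∀ n ≥ N, Dkx k t r n > Dkx k t (r + k) n := by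
  classical
  have hkt : k < t := by omega
  have hrkt : r + k ≤ t := by omega
  refine ⟨r + t + k + 1, fun n hn => ?_⟩
  -- the witness residue class representative
  have hm0 : ∃ m0 : ℕ, m0 % t = r % t ∧ ¬ k ∣ m0 ∧ 1 ≤ m0 ∧ m0 ≤ r + t := by
    by_cases hd : k ∣ r
    · refine ⟨r + t, by simp [Nat.add_mod_right], ?_, by omega, le_rfl⟩
      intro hdd
      have : k ∣ t := (Nat.dvd_add_right hd).1 hdd
      have : k ∣ Nat.gcd k t := Nat.dvd_gcd dvd_rfl this
      rw [hcop] at this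
      have := Nat.le_of_dvd one_pos this
      omega
    · exact ⟨r, rfl, hd, hr1, by omega⟩
  obtain ⟨m0, hm0t, hm0nd, hm01, hm0le⟩ := hm0
  rw [Dkx_eq_F k t r n hk, Dkx_eq_F k t (r + k) n hk]
  set G : ℕ → ℕ := fun m => ∑ j ∈ Icc 1 n,
    if (m % t = (r + k) % t ∧ 1 ≤ m ∧ ¬ k ∣ m ∧ j * m ≤ n) then bk k (n - j * m) else 0
    with hG
  set F : ℕ → ℕ := fun m => ∑ j ∈ Icc 1 n,
    if (m % t = r % t ∧ 1 ≤ m ∧ ¬ k ∣ m ∧ j * m ≤ n) then bk k (n - j * m) else 0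
    with hF
  show ∑ m ∈ range (n + 1), G m < ∑ m ∈ range (n + 1), F m
  -- key : conditions of G at (k+m) imply conditions of F at m
  have hGcond : ∀ m j : ℕ, ((k + m) % t = (r + k) % t ∧ 1 ≤ k + m ∧ ¬ k ∣ (k + m) ∧ j * (k + m) ≤ n)
      → (m % t = r % t ∧ 1 ≤ m ∧ ¬ k ∣ m ∧ j * m ≤ n) := by
    intro m j ⟨h1, h2, h3, h4⟩
    have hge : r + k ≤ k + m := ge_of_modcond t (r + k) (k + m) (by omega) hrkt (by omega) h2 h1
    refine ⟨?_, by omega, ?_, ?_⟩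
    · have : (k + m) % t = (k + r) % t := by rw [h1]; ring_nf
      exact Nat.ModEq.add_left_cancel' k this
    · intro hdvd
      exact h3 (Nat.dvd_add dvd_rfl hdvd)
    · calc j * m ≤ j * (k + m) := Nat.mul_le_mul_left j (by omega)
        _ ≤ n := h4
  -- termwise bound
  have hGF : ∀ m : ℕ, G (k + m) ≤ F m := by
    intro m
    apply Finset.sum_le_sum
    intro j _
    by_cases hc : ((k + m) % t = (r + k) % t ∧ 1 ≤ k + m ∧ ¬ k ∣ (k + m) ∧ j * (k + m) ≤ n)
    · rw [if_pos hc, if_pos (hGcond m j hc)]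
      exact bk_mono k hk (Nat.sub_le_sub_left (Nat.mul_le_mul_left j (by omega)) n)
    · rw [if_neg hc]
      exact Nat.zero_le _
  -- G vanishes below k
  have hGzero : ∀ m ∈ range k, G m = 0 := by
    intro m hm
    rw [Finset.mem_range] at hm
    apply Finset.sum_eq_zero
    intro j _
    rw [if_neg]
    rintro ⟨h1, h2, h3, h4⟩
    have := ge_of_modcond t (r + k) m (by omega) hrkt (by omega) h2 h1
    omega
  have step1 : ∑ m ∈ range (n + 1), G m ≤ ∑ m ∈ range (n + 1), G (k + m) := by
    calc ∑ m ∈ range (n + 1), G m ≤ ∑ m ∈ range (k + (n + 1)), G m :=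
          Finset.sum_le_sum_of_subset (Finset.range_subset_range.2 (by omega))
      _ = ∑ m ∈ range k, G m + ∑ m ∈ range (n + 1), G (k + m) := Finset.sum_range_add G k (n + 1)
      _ = ∑ m ∈ range (n + 1), G (k + m) := by
          rw [Finset.sum_eq_zero hGzero, zero_add]
  have step2 : ∑ m ∈ range (n + 1), G (k + m) < ∑ m ∈ range (n + 1), F m := by
    apply Finset.sum_lt_sum (fun m _ => hGF m)
    refine ⟨m0, Finset.mem_range.2 (by omega), ?_⟩
    -- strict inequality at m0, via j = 1
    apply Finset.sum_lt_sum
    · intro j _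
      by_cases hc : ((k + m0) % t = (r + k) % t ∧ 1 ≤ k + m0 ∧ ¬ k ∣ (k + m0) ∧ j * (k + m0) ≤ n)
      · rw [if_pos hc, if_pos (hGcond m0 j hc)]
        exact bk_mono k hk (Nat.sub_le_sub_left (Nat.mul_le_mul_left j (by omega)) n)
      · rw [if_neg hc]
        exact Nat.zero_le _
    · refine ⟨1, Finset.mem_Icc.2 (by omega), ?_⟩
      have hfpos : (m0 % t = r % t ∧ 1 ≤ m0 ∧ ¬ k ∣ m0 ∧ 1 * m0 ≤ n) :=
        ⟨hm0t, hm01, hm0nd, by omega⟩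
      rw [if_pos hfpos]
      have hkey : bk k (n - 1 * (k + m0)) < bk k (n - 1 * m0) := by
        have h1 : n - 1 * (k + m0) = n - k - m0 := by omega
        have h2 : n - 1 * m0 = (n - k - m0) + k := by omega
        rw [h1, h2]
        exact bk_lt_add k (n - k - m0) k hk (by omega) hk
      by_cases hc : ((k + m0) % t = (r + k) % t ∧ 1 ≤ k + m0 ∧ ¬ k ∣ (k + m0) ∧ 1 * (k + m0) ≤ n)
      · rw [if_pos hc]
        exact hkey
      · rw [if_neg hc]
        have := bk_pos k (n - 1 * m0) hk
        omega
  exact lt_of_le_of_lt step1 step2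
end

section
/- Let k, t ≥ 2 be coprime integers, let 1 ≤ r ≤ y ≤ t and r < s ≤ t. If k ≥ y(y+1), then for all sufficiently large n, D_k^×(r,t;n) > D_k^×(s,t;n). -/
/-!
Write `p_k(N)` for the number of partitions of `N` into parts not divisible by `k`. Removing `j`
copies of a part `m` gives `D(c, n) = ∑ p_k(n - j m)`, summed over the pairs `(m, j)` with
`m ≡ c (mod t)`, `k ∤ m`, `j ≥ 1`, `j m ≤ n`. Since `p_k` is nondecreasing, Abel summation
reduces `D(s, n) < D(r, n)` to comparing how many such pairs have `j m ≤ X`, namely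
`W_c(X) = ∑ ⌊X / m⌋` over `m ≤ X`, `m ≡ c`, `k ∤ m`: we need `W_s ≤ W_r` everywhere and
`W_s(n) < W_r(n)`.

The multiples of `k` in the class of `c` form the progression `ρ_c + i k t` with `k ≤ ρ_c ≤ k t`,
so `W_c(X) = ∑ᵢ ⌊X / (c + i t)⌋ - ∑ᵢ ⌊X / (ρ_c + i k t)⌋`. Termwise, the first sum for `r` beats
the one for `s` by at least `⌊X/r⌋ - ⌊X/s⌋ + ⌊X/(r+t)⌋ - ⌊X/(s+t)⌋`; the second sums differ by
at most `⌊X/ρ_r⌋`, as the progressions interlace; and `⌊X/s⌋ + ⌊X/ρ_r⌋ ≤ ⌊X/r⌋` because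
`ρ_r ≥ k ≥ r (r + 1)`. The term `⌊X/(r+t)⌋ - ⌊X/(s+t)⌋` is positive once `X ≥ (r+t)(s+t)`.
-/

open scoped Real

open Finset

namespace Nat.Partition

variable {p : ℕ → Prop} [DecidablePred p]

lemma card_restricted_zero : #(restricted 0 p) = 1 := by
  rw [restricted, filter_true_of_mem (by simp), Finset.card_univ, Fintype.card_unique]

lemma card_restricted_mono (h1 : p 1) : Monotone fun n => #(restricted n p) := by
  refine monotone_nat_of_le_succ fun n => card_le_card_of_injOn
    (fun μ => ⟨1 ::ₘ μ.parts, fun hi => ?_, by simp [μ.parts_sum, add_comm]⟩) ?_ ?_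
  · rcases Multiset.mem_cons.mp hi with rfl | hi
    exacts [one_pos, μ.parts_pos hi]
  · intro μ hμ
    simp only [restricted, coe_filter, mem_univ, true_and, Set.mem_ofPred_eq,
      Multiset.mem_cons, forall_eq_or_imp] at hμ ⊢
    exact ⟨h1, hμ⟩
  · intro μ₁ _ μ₂ _ h
    exact Nat.Partition.ext ((Multiset.cons_inj_right 1).mp (congrArg Nat.Partition.parts h))

lemma count_mul_le {n : ℕ} (μ : n.Partition) (m : ℕ) : μ.parts.count m * m ≤ n := by
  obtain ⟨u, hu⟩ := Multiset.le_iff_exists_add.mp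
    (Multiset.le_count_iff_replicate_le.mp (le_refl (μ.parts.count m)))
  have := μ.parts_sum
  rw [hu, Multiset.sum_add, Multiset.sum_replicate, smul_eq_mul] at this
  omega

lemma card_restricted_filter_le_count {n m j : ℕ} (hm : 0 < m) (hpm : p m) (hjm : j * m ≤ n) :
    #((restricted n p).filter fun μ => j ≤ μ.parts.count m) = #(restricted (n - j * m) p) := by
  have hle {μ : n.Partition} (hμ : μ ∈ (restricted n p).filter fun μ => j ≤ μ.parts.count m) :
      Multiset.replicate j m ≤ μ.parts :=
    Multiset.le_count_iff_replicate_le.mp (mem_filter.mp hμ).2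
  refine card_bij'
    (fun μ hμ => ⟨μ.parts - Multiset.replicate j m,
      fun hi => μ.parts_pos (Multiset.mem_of_le tsub_le_self hi), ?_⟩)
    (fun ν _ => ⟨ν.parts + Multiset.replicate j m, fun hi => ?_, ?_⟩) ?_ ?_ ?_ ?_
  · have := congrArg Multiset.sum (tsub_add_cancel_of_le (hle hμ))
    rw [Multiset.sum_add, Multiset.sum_replicate, smul_eq_mul, μ.parts_sum] at this
    omega
  · rcases Multiset.mem_add.mp hi with hi | hi
    exacts [ν.parts_pos hi, (Multiset.eq_of_mem_replicate hi).symm ▸ hm]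
  · rw [Multiset.sum_add, Multiset.sum_replicate, smul_eq_mul, ν.parts_sum]
    omega
  · intro μ hμ
    simp only [restricted, mem_filter, mem_univ, true_and] at hμ ⊢
    exact fun i hi => hμ.1 i (Multiset.mem_of_le tsub_le_self hi)
  · intro ν hν
    simp only [restricted, mem_filter, mem_univ, true_and, Multiset.mem_add,
      Multiset.count_add, Multiset.count_replicate_self] at hν ⊢
    refine ⟨fun i hi => hi.elim (hν i) fun hi => ?_, by omega⟩
    rwa [Multiset.eq_of_mem_replicate hi]
  · exact fun μ hμ => Nat.Partition.ext (tsub_add_cancel_of_le (hle hμ))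
  · exact fun ν _ => Nat.Partition.ext (add_tsub_cancel_right ν.parts _)

variable (p) in
/-- `⟨m, j⟩` stands for `j` copies of the part `m`, which fit into `n` when `j * m ≤ n`. -/
def partCopies (n : ℕ) : Finset (Σ _ : ℕ, ℕ) :=
  ((Icc 1 n).filter p).sigma fun m => Icc 1 (n / m)

lemma mul_le_of_mem_partCopies {n : ℕ} {e : Σ _ : ℕ, ℕ} (he : e ∈ partCopies p n) :
    e.2 * e.1 ≤ n := by
  simp only [partCopies, mem_sigma, mem_filter, mem_Icc] at he
  exact (Nat.le_div_iff_mul_le (by omega)).mp he.2.2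

lemma card_filter_le_Icc_div {c N m : ℕ} (hm : 0 < m) (hc : c * m ≤ N) :
    #((Icc 1 (N / m)).filter (· ≤ c)) = c := by
  have := (Nat.le_div_iff_mul_le hm).mpr hc
  rw [show (Icc 1 (N / m)).filter (· ≤ c) = Icc 1 c by ext; simp only [mem_filter, mem_Icc]; omega]
  simp

variable (q : ℕ → Prop) [DecidablePred q]

lemma card_filter_parts_eq_sum (n : ℕ) {μ : n.Partition} (hμ : μ ∈ restricted n p) :
    (μ.parts.filter q).card = ∑ m ∈ (Icc 1 n).filter (fun m => p m ∧ q m),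
      #((Icc 1 (n / m)).filter (· ≤ μ.parts.count m)) := by
  rw [← Multiset.sum_count_eq_card (s := (Icc 1 n).filter (fun m => p m ∧ q m))]
  · refine sum_congr rfl fun m hm => ?_
    simp only [mem_filter, mem_Icc] at hm
    rw [Multiset.count_filter_of_pos hm.2.2, card_filter_le_Icc_div (by omega) (count_mul_le μ m)]
  · intro a ha
    obtain ⟨ha, hqa⟩ := Multiset.mem_filter.mp ha
    simp only [restricted, mem_filter, mem_univ, true_and] at hμ
    simp only [mem_filter, mem_Icc]
    exact ⟨⟨μ.parts_pos ha, le_of_mem_parts ha⟩, hμ a ha, hqa⟩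

lemma sum_card_filter_parts (n : ℕ) :
    ∑ μ ∈ restricted n p, (μ.parts.filter q).card =
      ∑ e ∈ partCopies (fun m => p m ∧ q m) n, #(restricted (n - e.2 * e.1) p) := by
  rw [partCopies, sum_sigma]
  calc ∑ μ ∈ restricted n p, (μ.parts.filter q).card
      = ∑ μ ∈ restricted n p, ∑ m ∈ (Icc 1 n).filter (fun m => p m ∧ q m),
          ∑ j ∈ Icc 1 (n / m), if j ≤ μ.parts.count m then 1 else 0 :=
        sum_congr rfl fun μ hμ => by
          simp only [card_filter_parts_eq_sum q n hμ, card_filter]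
    _ = ∑ m ∈ (Icc 1 n).filter (fun m => p m ∧ q m), ∑ j ∈ Icc 1 (n / m),
          #((restricted n p).filter fun μ => j ≤ μ.parts.count m) := by
        rw [sum_comm]
        refine sum_congr rfl fun m _ => ?_
        rw [sum_comm]
        simp only [card_filter]
    _ = _ := by
        refine sum_congr rfl fun m hm => sum_congr rfl fun j hj => ?_
        simp only [mem_filter, mem_Icc] at hm hj
        exact card_restricted_filter_le_count (by omega) hm.2.1
          ((Nat.le_div_iff_mul_le (by omega)).mp hj.2)

lemma card_filter_partCopies {n X : ℕ} (hX : X ≤ n) :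
    #((partCopies p n).filter fun e => e.2 * e.1 ≤ X) = ∑ m ∈ (Icc 1 X).filter p, X / m := by
  rw [card_eq_sum_ones, sum_filter, partCopies, sum_sigma,
    ← sum_subset (filter_subset_filter p (Icc_subset_Icc_right hX))]
  · refine sum_congr rfl fun m hm => ?_
    have hm : 0 < m := by simp only [mem_filter, mem_Icc] at hm; omega
    simp_rw [← Nat.le_div_iff_mul_le hm, ← card_filter]
    exact card_filter_le_Icc_div hm ((Nat.div_mul_le_self X m).trans hX)
  · intro m hmn hmX
    simp only [mem_filter, mem_Icc] at hmn hmX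
    have hXm : X < m := by_contra fun h => hmX ⟨⟨hmn.1.1, by omega⟩, hmn.2⟩
    refine sum_eq_zero fun j hj => if_neg ?_
    have : m ≤ j * m := Nat.le_mul_of_pos_left m (by simp only [mem_Icc] at hj; omega)
    simp only
    omega

lemma card_partCopies (n : ℕ) : #(partCopies p n) = ∑ m ∈ (Icc 1 n).filter p, n / m := by
  rw [← card_filter_partCopies le_rfl, filter_true_of_mem fun _ => mul_le_of_mem_partCopies]

end Nat.Partition

section LayerCake

variable {ι κ : Type*} {f : ℕ → ℕ} {N : ℕ}

lemma Antitone.eq_add_sum_range (hf : Antitone f) {x : ℕ} (hx : x ≤ N) :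
    f x = f N + ∑ y ∈ range N, if x ≤ y then f y - f (y + 1) else 0 := by
  induction N with
  | zero => simp [Nat.le_zero.mp hx]
  | succ N ih =>
    rw [sum_range_succ]
    rcases hx.lt_or_eq with hx | rfl
    · rw [ih (by omega), if_pos (by omega)]
      have := hf (Nat.le_add_right N 1)
      omega
    · rw [sum_eq_zero fun y hy => if_neg (by simp only [mem_range] at hy; omega)]
      simp

lemma Antitone.sum_comp_eq (hf : Antitone f) (A : Finset ι) {g : ι → ℕ}
    (hA : ∀ a ∈ A, g a ≤ N) :
    ∑ a ∈ A, f (g a) = #A * f N + ∑ y ∈ range N, (f y - f (y + 1)) * #(A.filter (g · ≤ y)) := by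
  rw [sum_congr rfl fun a ha => hf.eq_add_sum_range (hA a ha), sum_add_distrib, sum_const,
    smul_eq_mul, sum_comm]
  congr 1
  refine sum_congr rfl fun y _ => ?_
  rw [← sum_filter, sum_const, smul_eq_mul, mul_comm]

lemma Antitone.sum_comp_add_le (hf : Antitone f) {A : Finset ι} {B : Finset κ} {g : ι → ℕ}
    {h : κ → ℕ} (hA : ∀ a ∈ A, g a ≤ N) (hB : ∀ b ∈ B, h b ≤ N)
    (hdom : ∀ y ≤ N, #(B.filter (h · ≤ y)) ≤ #(A.filter (g · ≤ y))) :
    ∑ b ∈ B, f (h b) + (#A - #B) * f N ≤ ∑ a ∈ A, f (g a) := by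
  have hcard : #B ≤ #A := by
    simpa only [filter_true_of_mem hA, filter_true_of_mem hB] using hdom N le_rfl
  have hlayers : ∑ y ∈ range N, (f y - f (y + 1)) * #(B.filter (h · ≤ y)) ≤
      ∑ y ∈ range N, (f y - f (y + 1)) * #(A.filter (g · ≤ y)) :=
    sum_le_sum fun y hy => Nat.mul_le_mul_left _ (hdom y (mem_range.mp hy).le)
  rw [hf.sum_comp_eq A hA, hf.sum_comp_eq B hB]
  have : #B * f N + (#A - #B) * f N = #A * f N := by
    rw [← add_mul, Nat.add_sub_cancel' hcard]
  omega

end LayerCake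

def divSumAP (a d X : ℕ) : ℕ := ∑ i ∈ range (X + 1), X / (a + i * d)

lemma le_of_mod_eq_of_le {a d m : ℕ} (had : a ≤ d) (hm : 0 < m) (h : m % d = a % d) : a ≤ m := by
  rcases had.lt_or_eq with had | rfl
  · rw [Nat.mod_eq_of_lt had] at h
    exact h ▸ Nat.mod_le m d
  · rw [Nat.mod_self] at h
    exact Nat.le_of_dvd hm (Nat.dvd_of_mod_eq_zero h)

lemma sum_div_filter_mod_eq {a d : ℕ} (ha : 0 < a) (had : a ≤ d) (X : ℕ) :
    ∑ m ∈ (Icc 1 X).filter (· % d = a % d), X / m = divSumAP a d X := by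
  have hd : 0 < d := ha.trans_le had
  symm
  refine sum_bij_ne_zero (fun i _ _ => a + i * d) (fun i _ hi => ?_) (fun i₁ _ _ i₂ _ _ h => ?_)
    (fun m hm hXm => ?_) (fun _ _ _ => rfl)
  · rw [Ne, Nat.div_eq_zero_iff, not_or] at hi
    simp only [mem_filter, mem_Icc, Nat.add_mul_mod_self_right, and_true]
    omega
  · exact Nat.eq_of_mul_eq_mul_right hd (by omega)
  · simp only [mem_filter, mem_Icc] at hm
    have ham := le_of_mod_eq_of_le had (by omega) hm.2
    obtain ⟨i, hi⟩ := (Nat.modEq_iff_dvd' ham).mp hm.2.symm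
    have him : a + i * d = m := by rw [mul_comm]; omega
    refine ⟨i, mem_range.mpr ?_, him ▸ hXm, him⟩
    rw [Ne, Nat.div_eq_zero_iff, not_or] at hXm
    have : i ≤ i * d := Nat.le_mul_of_pos_right i hd
    omega

lemma divSumAP_add_div_le {r s : ℕ} (hr : 0 < r) (hrs : r ≤ s) (d X : ℕ) :
    divSumAP s d X + X / r + X / (r + d) ≤ divSumAP r d X + X / s + X / (s + d) := by
  rcases X with _ | X
  · simp [divSumAP]
  have hterm (i : ℕ) : (X + 1) / (s + i * d) ≤ (X + 1) / (r + i * d) :=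
    Nat.div_le_div_left (by omega) (by omega)
  have htail : ∑ i ∈ range X, (X + 1) / (s + (i + 1 + 1) * d) ≤
      ∑ i ∈ range X, (X + 1) / (r + (i + 1 + 1) * d) := sum_le_sum fun i _ => hterm _
  simp only [divSumAP, sum_range_succ', zero_add, zero_mul, add_zero, one_mul]
  omega

lemma divSumAP_le_div_add {ρ σ d : ℕ} (hσ : σ ≤ ρ + d) (hσ0 : 0 < σ) (X : ℕ) :
    divSumAP ρ d X ≤ X / ρ + divSumAP σ d X := by
  have hshift : ∑ i ∈ range X, X / (ρ + (i + 1) * d) ≤ ∑ i ∈ range (X + 1), X / (σ + i * d) :=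
    calc ∑ i ∈ range X, X / (ρ + (i + 1) * d)
        ≤ ∑ i ∈ range X, X / (σ + i * d) :=
          sum_le_sum fun i _ => Nat.div_le_div_left (by rw [add_one_mul]; omega) (by omega)
      _ ≤ ∑ i ∈ range (X + 1), X / (σ + i * d) :=
          sum_le_sum_of_subset (range_subset_range.mpr (Nat.le_succ X))
  rw [divSumAP, sum_range_succ', zero_mul, add_zero, add_comm]
  exact Nat.add_le_add_left hshift _

lemma Nat.div_add_div_le_div {a b c : ℕ} (ha : 0 < a) (hb : 0 < b) (hc : 0 < c)
    (h : a * b + a * c ≤ b * c) (X : ℕ) : X / b + X / c ≤ X / a := by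
  rw [Nat.le_div_iff_mul_le ha]
  refine Nat.le_of_mul_le_mul_right ?_ (Nat.mul_pos hb hc)
  calc (X / b + X / c) * a * (b * c) = X / b * b * (a * c) + X / c * c * (a * b) := by ring
    _ ≤ X * (a * c) + X * (a * b) := by gcongr <;> exact Nat.div_mul_le_self X _
    _ ≤ X * (b * c) := by rw [← mul_add, add_comm]; exact Nat.mul_le_mul_left X h

lemma Nat.div_add_one_le_div {a b X : ℕ} (ha : 0 < a) (hab : a < b) (hX : a * b ≤ X) :
    X / b + 1 ≤ X / a := by
  rw [Nat.le_div_iff_mul_le ha]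
  refine Nat.le_of_mul_le_mul_right ?_ (ha.trans hab)
  calc (X / b + 1) * a * b = X / b * b * a + a * b := by ring
    _ ≤ X * a + a * b := by gcongr; exact Nat.div_mul_le_self X b
    _ ≤ X * b := by nlinarith

lemma Nat.mul_add_mul_le_mul {r s ρ : ℕ} (hrs : r < s) (hρ : r * (r + 1) ≤ ρ) :
    r * s + r * ρ ≤ s * ρ := by
  obtain ⟨e, rfl⟩ := Nat.exists_eq_add_of_lt hrs
  nlinarith [Nat.mul_le_mul_left (e + 1) hρ, Nat.zero_le (r * r * e)]

section ResidueClass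

variable {k t : ℕ}

variable (k t) in
def classDivSum (c X : ℕ) : ℕ :=
  ∑ m ∈ (Icc 1 X).filter (fun m => ¬ k ∣ m ∧ m % t = c % t), X / m

lemma exists_mod_eq_mem_Icc {d : ℕ} (hd : 0 < d) (z : ℕ) : ∃ ρ, 0 < ρ ∧ ρ ≤ d ∧ ρ ≡ z [MOD d] := by
  by_cases h : z % d = 0
  · exact ⟨d, hd, le_rfl, (Nat.mod_self d).trans h.symm⟩
  · exact ⟨z % d, Nat.pos_of_ne_zero h, (Nat.mod_lt z hd).le, Nat.mod_mod z d⟩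

lemma exists_dvd_and_mod_eq_iff (hcop : Nat.Coprime k t) (hkt : 0 < k * t) (c : ℕ) :
    ∃ ρ, 0 < ρ ∧ ρ ≤ k * t ∧ ∀ m, (k ∣ m ∧ m % t = c % t) ↔ m % (k * t) = ρ % (k * t) := by
  obtain ⟨z, hzk, hzt⟩ := Nat.chineseRemainder hcop 0 c
  obtain ⟨ρ, hρ, hρkt, hρz⟩ := exists_mod_eq_mem_Icc hkt z
  refine ⟨ρ, hρ, hρkt, fun m => ?_⟩
  change k ∣ m ∧ m ≡ c [MOD t] ↔ m ≡ ρ [MOD k * t]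
  rw [show m ≡ ρ [MOD k * t] ↔ m ≡ z [MOD k * t] from
      ⟨fun h => h.trans hρz, fun h => h.trans hρz.symm⟩,
    ← Nat.modEq_and_modEq_iff_modEq_mul hcop, ← Nat.modEq_zero_iff_dvd]
  exact and_congr ⟨fun h => h.trans hzk.symm, fun h => h.trans hzk⟩
    ⟨fun h => h.trans hzt.symm, fun h => h.trans hzt⟩

lemma classDivSum_add_divSumAP {c ρ : ℕ} (hc : 0 < c) (hct : c ≤ t) (hρ : 0 < ρ)
    (hρkt : ρ ≤ k * t) (hρm : ∀ m, (k ∣ m ∧ m % t = c % t) ↔ m % (k * t) = ρ % (k * t))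
    (X : ℕ) : classDivSum k t c X + divSumAP ρ (k * t) X = divSumAP c t X := by
  rw [classDivSum, ← sum_div_filter_mod_eq hρ hρkt, ← sum_div_filter_mod_eq hc hct,
    ← sum_filter_add_sum_filter_not ((Icc 1 X).filter (· % t = c % t)) (fun m => ¬ k ∣ m),
    filter_filter, filter_filter]
  congr 2 <;> ext m <;> simp only [mem_filter, ← hρm m] <;> tauto

lemma classDivSum_add_le (hcop : Nat.Coprime k t) {r s : ℕ} (hr : 0 < r) (hrs : r < s)
    (hst : s ≤ t) (hrk : r * (r + 1) ≤ k) (X : ℕ) :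
    classDivSum k t s X + X / (r + t) ≤ classDivSum k t r X + X / (s + t) := by
  have hkt : 0 < k * t := Nat.mul_pos (by nlinarith) (by omega)
  obtain ⟨ρ, hρ, hρkt, hρm⟩ := exists_dvd_and_mod_eq_iff hcop hkt r
  obtain ⟨σ, hσ, hσkt, hσm⟩ := exists_dvd_and_mod_eq_iff hcop hkt s
  have hkρ : k ≤ ρ := Nat.le_of_dvd hρ ((hρm ρ).mpr rfl).1
  have hWr := classDivSum_add_divSumAP hr (by omega) hρ hρkt hρm X
  have hWs := classDivSum_add_divSumAP (by omega) hst hσ hσkt hσm X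
  have hclass := divSumAP_add_div_le hr hrs.le t X
  have hmult := divSumAP_le_div_add (ρ := ρ) (d := k * t) (by omega) hσ X
  have hρr := Nat.div_add_div_le_div hr (by omega) hρ
    (Nat.mul_add_mul_le_mul hrs (hrk.trans hkρ)) X
  omega

lemma classDivSum_le (hcop : Nat.Coprime k t) {r s : ℕ} (hr : 0 < r) (hrs : r < s)
    (hst : s ≤ t) (hrk : r * (r + 1) ≤ k) (X : ℕ) : classDivSum k t s X ≤ classDivSum k t r X := by
  have := classDivSum_add_le hcop hr hrs hst hrk X
  have : X / (s + t) ≤ X / (r + t) := Nat.div_le_div_left (by omega) (by omega)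
  omega

lemma classDivSum_lt (hcop : Nat.Coprime k t) {r s : ℕ} (hr : 0 < r) (hrs : r < s)
    (hst : s ≤ t) (hrk : r * (r + 1) ≤ k) {X : ℕ} (hX : (r + t) * (s + t) ≤ X) :
    classDivSum k t s X < classDivSum k t r X := by
  have := classDivSum_add_le hcop hr hrs hst hrk X
  have := Nat.div_add_one_le_div (by omega) (by omega) hX
  omega

end ResidueClass

open Nat.Partition

lemma Dkx_eq_sum_partCopies (k t c n : ℕ) :
    Dkx k t c n = ∑ e ∈ partCopies (fun m => ¬ k ∣ m ∧ m % t = c % t) n,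
      #(restricted (n - e.2 * e.1) (¬ k ∣ ·)) := by
  rw [← sum_card_filter_parts, restricted, sum_filter]
  rfl

lemma Dkx_add_sub_le {k t c c' n : ℕ} (hk : k ≠ 1)
    (hdom : ∀ X ≤ n, classDivSum k t c' X ≤ classDivSum k t c X) :
    Dkx k t c' n + (classDivSum k t c n - classDivSum k t c' n) ≤ Dkx k t c n := by
  have hf : Antitone fun x => #(restricted (n - x) (¬ k ∣ ·)) :=
    (card_restricted_mono (mt Nat.dvd_one.mp hk)).comp_antitone antitone_const_tsub
  have key := hf.sum_comp_add_le (A := partCopies (fun m => ¬ k ∣ m ∧ m % t = c % t) n)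
    (B := partCopies (fun m => ¬ k ∣ m ∧ m % t = c' % t) n)
    (fun _ => mul_le_of_mem_partCopies) (fun _ => mul_le_of_mem_partCopies) fun X hX => by
      rw [card_filter_partCopies hX, card_filter_partCopies hX]
      exact hdom X hX
  rw [card_partCopies, card_partCopies, Nat.sub_self, card_restricted_zero, mul_one] at key
  rwa [Dkx_eq_sum_partCopies, Dkx_eq_sum_partCopies]

theorem stmt3_general (k t r s y : ℕ) (hcop : Nat.Coprime k t)
    (hr1 : 1 ≤ r) (hry : r ≤ y) (hrs : r < s) (hst : s ≤ t)
    (hky : k ≥ y * (y + 1)) :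
    ∃ N : ℕ, ∀ n ≥ N, Dkx k t r n > Dkx k t s n := by
  have hrk : r * (r + 1) ≤ k := (Nat.mul_le_mul hry (by omega)).trans hky
  refine ⟨(r + t) * (s + t), fun n hn => ?_⟩
  have hD := Dkx_add_sub_le (t := t) (c := r) (c' := s) (n := n) (by nlinarith)
    fun X _ => classDivSum_le hcop hr1 hrs hst hrk X
  have := classDivSum_lt hcop hr1 hrs hst hrk hn
  omega

theorem stmt3 (k t r s y : ℕ) (hk : 2 ≤ k) (ht : 2 ≤ t) (hcop : Nat.Coprime k t)
    (hr1 : 1 ≤ r) (hry : r ≤ y) (hyt : y ≤ t) (hrs : r < s) (hst : s ≤ t)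
    (hky : k ≥ y * (y + 1)) :
    ∃ N : ℕ, ∀ n ≥ N, Dkx k t r n > Dkx k t s n :=
  stmt3_general k t r s y hcop hr1 hry hrs hst hky
end

section
/- Let b be a real number and let f be a differentiable real-valued function on [b,∞) such that f' is decreasing (antitone) on [b,∞) and f'(b) < 0. Then ∑_{n=0}^∞ e^{f(b+n)} ≤ e^{f(b)}/(1 − e^{f'(b)}). -/
/-!
Since `f'` is antitone, `f` is concave on `[b, ∞)` and so lies below its tangent line at `b`:
`f (b + n) ≤ f b + n f'(b)`. Exponentiating, the terms are dominated by the geometric sequence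
`e^{f b} (e^{f'(b)})^n`, whose sum is `e^{f b} / (1 - e^{f'(b)})`.
-/

open Set

theorem concaveOn_of_hasDerivAt_of_antitoneOn {D : Set ℝ} (hD : Convex ℝ D) {f f' : ℝ → ℝ}
    (hderiv : ∀ x ∈ D, HasDerivAt f (f' x) x) (hanti : AntitoneOn f' D) : ConcaveOn ℝ D f := by
  refine AntitoneOn.concaveOn_of_deriv hD
    (fun x hx ↦ (hderiv x hx).continuousAt.continuousWithinAt)
    (fun x hx ↦ (hderiv x (interior_subset hx)).differentiableAt.differentiableWithinAt) ?_
  refine (hanti.mono interior_subset).congr fun x hx ↦ ?_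
  exact ((hderiv x (interior_subset hx)).deriv).symm

theorem ConcaveOn.le_add_mul_sub_of_hasDerivAt {S : Set ℝ} {f : ℝ → ℝ} {x y f' : ℝ}
    (hfc : ConcaveOn ℝ S f) (hx : x ∈ S) (hy : y ∈ S) (hf' : HasDerivAt f f' x) :
    f y ≤ f x + f' * (y - x) := by
  rcases lt_trichotomy x y with hxy | rfl | hyx
  · have h := hfc.slope_le_of_hasDerivAt hx hy hxy hf'
    rw [slope_def_field, div_le_iff₀ (sub_pos.2 hxy)] at h
    linarith
  · simp
  · have h := hfc.le_slope_of_hasDerivAt hy hx hyx hf'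
    rw [slope_def_field, le_div_iff₀ (sub_pos.2 hyx)] at h
    linarith

theorem tsum_le_div_one_sub_of_le_geometric {a : ℕ → ℝ} {C r : ℝ} (ha : ∀ n, 0 ≤ a n)
    (hr₀ : 0 ≤ r) (hr₁ : r < 1) (h : ∀ n, a n ≤ C * r ^ n) : ∑' n, a n ≤ C / (1 - r) := by
  have hgeom : HasSum (fun n ↦ C * r ^ n) (C / (1 - r)) := by
    simpa only [div_eq_mul_inv] using (hasSum_geometric_of_lt_one hr₀ hr₁).mul_left C
  exact hasSum_le h (Summable.of_nonneg_of_le ha h hgeom.summable).hasSum hgeom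

theorem stmt11 (b : ℝ) (f f' : ℝ → ℝ)
    (hderiv : ∀ x ∈ Set.Ici b, HasDerivAt f (f' x) x)
    (hanti : AntitoneOn f' (Set.Ici b))
    (hneg : f' b < 0) :
    ∑' n : ℕ, Real.exp (f (b + n)) ≤ Real.exp (f b) / (1 - Real.exp (f' b)) := by
  have hconc := concaveOn_of_hasDerivAt_of_antitoneOn (convex_Ici b) hderiv hanti
  have htangent (n : ℕ) : f (b + n) ≤ f b + n * f' b := by
    have := hconc.le_add_mul_sub_of_hasDerivAt self_mem_Ici
      (mem_Ici.2 (le_add_of_nonneg_right n.cast_nonneg)) (hderiv b self_mem_Ici)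
    linarith
  refine tsum_le_div_one_sub_of_le_geometric (fun n ↦ (Real.exp_pos _).le) (Real.exp_pos _).le
    (Real.exp_lt_one_iff.2 hneg) fun n ↦ ?_
  calc Real.exp (f (b + n)) ≤ Real.exp (f b + n * f' b) := Real.exp_le_exp.2 (htangent n)
    _ = Real.exp (f b) * Real.exp (f' b) ^ n := by rw [Real.exp_add, ← Real.exp_nat_mul]
end

section
/- Let k ≥ 2 be an integer. For all sufficiently large Δ > 0 there exist ε > 0, C > 0, and η₀ > 0 such that for all z = η + iy with 0 < η ≤ η₀ and Δ·η ≤ |y| ≤ π, |ξ_k(e^{−z})| ≤ C · ξ_k(e^{−η}) · e^{−ε/η}. -/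
/-!
Write each factor of `ξ_k(q)` as the geometric sum `P(w) = 1 + w + ⋯ + w^{k-1}` with `w = qⁿ`.
For `|w| ≤ 1` the first two terms satisfy `|1 + w| ≤ 1 + |w| - (|w| - Re w)/2`, and since
`P(|w|) ≤ k` this gives `|P(w)| ≤ P(|w|) · exp(-(|w| - Re w)/(2k))`. Multiplying over `n`,
`|ξ_k(q)| ≤ ξ_k(|q|) · exp(-S/(2k))` where
`S = ∑_{n ≥ 1} (|q|ⁿ - Re qⁿ) = |q|/(1-|q|) - Re(q/(1-q))`.
For `q = e^{-z}` the first term of `S` is at least `|q|/η`, while Jordan's inequality gives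
`|1 - q| ≥ 2|y|/π - η ≥ 3η` once `|y| ≥ 2πη`, so the second is at most a third of the first and
`S ≥ 1/(3η)`.
-/

open scoped Real

/-- The generating function `ξ_k(q) = ∏_{n ≥ 1} (1 - q^{nk})/(1 - q^n)` of
`k`-indivisible partitions. -/
noncomputable def xiK (k : ℕ) (q : ℂ) : ℂ :=
  ∏' n : ℕ, (1 - q ^ ((n + 1) * k)) / (1 - q ^ (n + 1))

open Finset

lemma xiK_eq_tprod_geom_sum (k : ℕ) {q : ℂ} (hq : ‖q‖ < 1) :
    xiK k q = ∏' n : ℕ, ∑ j ∈ range k, (q ^ (n + 1)) ^ j := by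
  refine tprod_congr fun n => ?_
  have hpow : ‖q ^ (n + 1)‖ < 1 := by
    rw [norm_pow]; exact pow_lt_one₀ (norm_nonneg q) hq (by omega)
  have hne : q ^ (n + 1) ≠ 1 := fun h => by simp [h] at hpow
  rw [geom_sum_eq hne, pow_mul, ← neg_sub (q ^ (n + 1)) 1, ← neg_sub (_ ^ k) 1, neg_div_neg_eq]

lemma multipliable_geom_sum_pow {R : Type*} [NormedCommRing R] [NormOneClass R] [CompleteSpace R]
    {k : ℕ} (hk : 0 < k) {w : R} (hw : ‖w‖ < 1) :
    Multipliable fun n : ℕ => ∑ j ∈ range k, (w ^ (n + 1)) ^ j := by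
  have hsplit (n : ℕ) : ∑ j ∈ range k, (w ^ (n + 1)) ^ j
      = 1 + ∑ j ∈ Ico 1 k, (w ^ (n + 1)) ^ j := by
    rw [← sum_range_add_sum_Ico _ hk, sum_range_one, pow_zero]
  simp_rw [hsplit]
  refine multipliable_one_add_of_summable <|
    ((summable_geometric_of_lt_one (norm_nonneg w) hw).mul_left (k : ℝ)).of_nonneg_of_le
      (fun _ => norm_nonneg _) fun n => ?_
  calc ‖∑ j ∈ Ico 1 k, (w ^ (n + 1)) ^ j‖
      ≤ ∑ j ∈ Ico 1 k, ‖w‖ ^ n := by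
        refine (norm_sum_le _ _).trans (sum_le_sum fun j hj => ?_)
        have hj : 1 ≤ j := (mem_Ico.mp hj).1
        rw [← pow_mul]
        exact (norm_pow_le' w (by positivity)).trans
          (pow_le_pow_of_le_one (norm_nonneg w) hw.le (by nlinarith))
    _ ≤ k * ‖w‖ ^ n := by
        rw [sum_const, Nat.card_Ico, nsmul_eq_mul]
        gcongr
        exact_mod_cast Nat.sub_le k 1

lemma norm_one_add_le_of_norm_le_one {w : ℂ} (hw : ‖w‖ ≤ 1) :
    ‖1 + w‖ ≤ 1 + ‖w‖ - (‖w‖ - w.re) / 2 := by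
  have hsq : ‖1 + w‖ ^ 2 = 1 + 2 * w.re + ‖w‖ ^ 2 := by
    simp only [Complex.sq_norm, Complex.normSq_apply, Complex.add_re, Complex.add_im,
      Complex.one_re, Complex.one_im]
    ring
  have hre : |w.re| ≤ ‖w‖ := Complex.abs_re_le_norm w
  have hrhs : 0 ≤ 1 + ‖w‖ - (‖w‖ - w.re) / 2 := by linarith [neg_abs_le w.re]
  refine (abs_le_of_sq_le_sq' ?_ hrhs).2
  rw [hsq]
  nlinarith [le_abs_self w.re]

lemma norm_geom_sum_le_sub {k : ℕ} (hk : 2 ≤ k) {w : ℂ} (hw : ‖w‖ ≤ 1) :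
    ‖∑ j ∈ range k, w ^ j‖ ≤ ∑ j ∈ range k, ‖w‖ ^ j - (‖w‖ - w.re) / 2 := by
  rw [← sum_range_add_sum_Ico _ hk, ← sum_range_add_sum_Ico _ hk]
  simp only [sum_range_succ, sum_range_zero, zero_add, pow_zero, pow_one]
  calc ‖(1 + w) + ∑ j ∈ Ico 2 k, w ^ j‖
      ≤ ‖1 + w‖ + ∑ j ∈ Ico 2 k, ‖w‖ ^ j := by
        refine (norm_add_le _ _).trans (add_le_add_right ((norm_sum_le _ _).trans_eq ?_) _)
        simp only [norm_pow]
    _ ≤ (1 + ‖w‖ - (‖w‖ - w.re) / 2) + ∑ j ∈ Ico 2 k, ‖w‖ ^ j := by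
        gcongr; exact norm_one_add_le_of_norm_le_one hw
    _ = _ := by ring

lemma norm_geom_sum_le_mul_exp {k : ℕ} (hk : 2 ≤ k) {w : ℂ} (hw : ‖w‖ ≤ 1) :
    ‖∑ j ∈ range k, w ^ j‖ ≤
      (∑ j ∈ range k, ‖w‖ ^ j) * Real.exp (-((‖w‖ - w.re) / (2 * k))) := by
  set P := ∑ j ∈ range k, ‖w‖ ^ j
  set D := ‖w‖ - w.re
  have hD : 0 ≤ D := sub_nonneg.mpr (Complex.re_le_norm w)
  have hP0 : 0 ≤ P := sum_nonneg fun j _ => by positivity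
  have hPk : P ≤ k := (sum_le_sum fun j _ => pow_le_one₀ (norm_nonneg w) hw).trans_eq (by simp)
  calc ‖∑ j ∈ range k, w ^ j‖ ≤ P - D / 2 := norm_geom_sum_le_sub hk hw
    _ ≤ P * (1 - D / (2 * k)) := by
        have : P * D / (2 * k) ≤ D / 2 := by
          rw [div_le_iff₀ (by positivity)]; nlinarith
        rw [mul_one_sub, mul_div_assoc']; linarith
    _ ≤ P * Real.exp (-(D / (2 * k))) := by
        gcongr; linarith [Real.add_one_le_exp (-(D / (2 * k)))]

lemma hasProd_le_of_nonneg {ι : Type*} {f g : ι → ℝ} {a b : ℝ} (h0 : ∀ i, 0 ≤ f i)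
    (h : ∀ i, f i ≤ g i) (hf : HasProd f a) (hg : HasProd g b) : a ≤ b :=
  le_of_tendsto_of_tendsto' hf hg fun _ => prod_le_prod (fun i _ => h0 i) fun i _ => h i

noncomputable def geomDeficiency (q : ℂ) : ℝ := ‖q‖ / (1 - ‖q‖) - (q / (1 - q)).re

lemma hasSum_norm_pow_sub_re_pow {q : ℂ} (hq : ‖q‖ < 1) :
    HasSum (fun n : ℕ => ‖q‖ ^ (n + 1) - (q ^ (n + 1)).re) (geomDeficiency q) := by
  have hnorm := (hasSum_geometric_of_lt_one (norm_nonneg q) hq).mul_left ‖q‖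
  have hre := Complex.hasSum_re ((hasSum_geometric_of_norm_lt_one hq).mul_left q)
  simp only [← pow_succ'] at hnorm hre
  simpa only [geomDeficiency, div_eq_mul_inv] using hnorm.sub hre

theorem norm_xiK_le {k : ℕ} (hk : 2 ≤ k) {q : ℂ} (hq : ‖q‖ < 1) :
    ‖xiK k q‖ ≤ ‖xiK k ‖q‖‖ * Real.exp (-(geomDeficiency q / (2 * k))) := by
  have hk0 : 0 < k := by omega
  have hprod {w : ℂ} (hw : ‖w‖ < 1) :
      HasProd (fun n : ℕ => ‖∑ j ∈ range k, (w ^ (n + 1)) ^ j‖) ‖xiK k w‖ := by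
    rw [xiK_eq_tprod_geom_sum k hw]
    exact (multipliable_geom_sum_pow hk0 hw).hasProd.norm
  have hqr : ‖((‖q‖ : ℝ) : ℂ)‖ < 1 := by simpa using hq
  have hreal (n : ℕ) : ‖∑ j ∈ range k, ((‖q‖ : ℂ) ^ (n + 1)) ^ j‖
      = ∑ j ∈ range k, ‖q ^ (n + 1)‖ ^ j := by
    have h := Complex.norm_of_nonneg
      (sum_nonneg fun j _ => by positivity : 0 ≤ ∑ j ∈ range k, (‖q‖ ^ (n + 1)) ^ j)
    push_cast at h
    rw [h, norm_pow]
  refine hasProd_le_of_nonneg (fun _ => norm_nonneg _) (fun n => ?_) (hprod hq)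
    ((hprod hqr).mul ((hasSum_norm_pow_sub_re_pow hq).div_const (2 * k)).neg.rexp)
  rw [hreal, Function.comp_apply, ← norm_pow]
  exact norm_geom_sum_le_mul_exp hk ((norm_pow q _).trans_le (pow_le_one₀ (norm_nonneg q) hq.le))

lemma mul_abs_le_norm_exp_I_mul_sub_one {y : ℝ} (hy : |y| ≤ π) :
    2 / π * |y| ≤ ‖Complex.exp (Complex.I * y) - 1‖ := by
  have hsin : Real.sin (|y| / 2) ≤ |Real.sin (y / 2)| := by
    rcases abs_cases y with ⟨h, -⟩ | ⟨h, -⟩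
    · rw [h]; exact le_abs_self _
    · rw [h, neg_div, Real.sin_neg]; exact neg_le_abs _
  have hjordan := Real.mul_le_sin (x := |y| / 2) (by positivity) (by linarith)
  rw [Complex.norm_exp_I_mul_ofReal_sub_one, norm_mul, Real.norm_two, Real.norm_eq_abs]
  linarith

lemma norm_one_sub_exp_neg_ge {z : ℂ} (hη : 0 ≤ z.re) (hy : |z.im| ≤ π) :
    2 / π * |z.im| - z.re ≤ ‖1 - Complex.exp (-z)‖ := by
  set u := Complex.exp (Complex.I * ↑(-z.im))
  have hsplit : Complex.exp (-z) - 1 = (u - 1) - u * ((1 - Real.exp (-z.re) : ℝ) : ℂ) := by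
    rw [Complex.ofReal_sub, Complex.ofReal_one, mul_sub, mul_one, sub_sub_sub_cancel_left,
      Complex.ofReal_exp, ← Complex.exp_add]
    conv_lhs => rw [← Complex.re_add_im z]
    push_cast
    ring_nf
  have hrot : ‖u * ((1 - Real.exp (-z.re) : ℝ) : ℂ)‖ ≤ z.re := by
    rw [norm_mul, Complex.norm_exp_I_mul_ofReal, one_mul, Complex.norm_real, Real.norm_eq_abs,
      abs_of_nonneg (sub_nonneg.mpr (Real.exp_le_one_iff.mpr (neg_nonpos.mpr hη)))]
    linarith [Real.one_sub_le_exp_neg z.re]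
  have hu := mul_abs_le_norm_exp_I_mul_sub_one (y := -z.im) (by rwa [abs_neg])
  rw [abs_neg] at hu
  rw [norm_sub_rev, hsplit]
  linarith [norm_sub_norm_le (u - 1) (u * ((1 - Real.exp (-z.re) : ℝ) : ℂ))]

lemma one_div_three_mul_re_le_geomDeficiency {z : ℂ} (hη : 0 < z.re) (hη' : z.re ≤ 1 / 2)
    (hy : 2 * π * z.re ≤ |z.im|) (hy' : |z.im| ≤ π) :
    1 / (3 * z.re) ≤ geomDeficiency (Complex.exp (-z)) := by
  set q := Complex.exp (-z)
  set η := z.re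
  have ht : ‖q‖ = Real.exp (-η) := by rw [Complex.norm_exp, Complex.neg_re]
  have hgap : 1 - η ≤ ‖q‖ := ht ▸ Real.one_sub_le_exp_neg η
  have hgap' : ‖q‖ < 1 := ht ▸ Real.exp_lt_one_iff.mpr (by linarith)
  have hsep : 3 * η ≤ ‖1 - q‖ := by
    have := norm_one_sub_exp_neg_ge hη.le hy'
    have : 2 / π * (2 * π * η) = 4 * η := by field_simp; ring
    nlinarith [Real.pi_pos, div_pos two_pos Real.pi_pos]
  have hpole : (q / (1 - q)).re ≤ ‖q‖ / (3 * η) := by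
    refine (Complex.re_le_norm _).trans ?_
    rw [norm_div]
    exact div_le_div_of_nonneg_left (norm_nonneg q) (by positivity) hsep
  have hreal : ‖q‖ / η ≤ ‖q‖ / (1 - ‖q‖) :=
    div_le_div_of_nonneg_left (norm_nonneg q) (by linarith) (by linarith)
  calc 1 / (3 * η) ≤ ‖q‖ / η - ‖q‖ / (3 * η) := by
        rw [div_sub_div _ _ hη.ne' (by positivity),
          div_le_div_iff₀ (by positivity) (by positivity)]
        nlinarith [mul_pos hη hη]
    _ ≤ geomDeficiency q := by unfold geomDeficiency; linarith

theorem stmt14 (k : ℕ) (hk : 2 ≤ k) :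
    ∃ Δ₀ > (0 : ℝ), ∀ Δ ≥ Δ₀, ∃ ε > (0 : ℝ), ∃ C > (0 : ℝ), ∃ η₀ > (0 : ℝ),
      ∀ z : ℂ, 0 < z.re → z.re ≤ η₀ → Δ * z.re ≤ |z.im| → |z.im| ≤ π →
        ‖xiK k (Complex.exp (-z))‖ ≤
          C * ‖xiK k (Complex.exp (-(z.re : ℂ)))‖ * Real.exp (-ε / z.re) := by
  refine ⟨2 * π, by positivity, fun Δ hΔ =>
    ⟨1 / (6 * k), by positivity, 1, one_pos, 1 / 2, by norm_num, ?_⟩⟩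
  intro z hη hη' hy hy'
  have hnorm : ‖Complex.exp (-z)‖ = Real.exp (-z.re) := by
    rw [Complex.norm_exp, Complex.neg_re]
  have hreal : ((‖Complex.exp (-z)‖ : ℝ) : ℂ) = Complex.exp (-(z.re : ℂ)) := by
    rw [hnorm, Complex.ofReal_exp, Complex.ofReal_neg]
  have hdef := one_div_three_mul_re_le_geomDeficiency hη hη'
    ((mul_le_mul_of_nonneg_right hΔ hη.le).trans hy) hy'
  have hexp : -(1 / (6 * k)) / z.re = -(1 / (3 * z.re) / (2 * k)) := by field_simp; ring
  calc ‖xiK k (Complex.exp (-z))‖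
      ≤ ‖xiK k (Complex.exp (-(z.re : ℂ)))‖ *
          Real.exp (-(geomDeficiency (Complex.exp (-z)) / (2 * k))) :=
        hreal ▸ norm_xiK_le hk (hnorm ▸ Real.exp_lt_one_iff.mpr (neg_lt_zero.mpr hη))
    _ ≤ 1 * ‖xiK k (Complex.exp (-(z.re : ℂ)))‖ * Real.exp (-(1 / (6 * k)) / z.re) := by
        rw [one_mul, hexp]
        gcongr
end

section
/- Let 0 < b < a ≤ 1 be real numbers. Then (a − b)·(1/(ab) + 1/(b+1)) < ψ(a) − ψ(b) < (a − b)·(1/(ab) + π²/6). Moreover, if additionally a, b > 1/2, then ψ(a) − ψ(b) < (a − b)·(1/(ab) + π²/6 − 5/9). -/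
/-!
Telescoping `ψ(x + 1) = ψ(x) + 1/x` gives `ψ(a) - ψ(b) = ∑_{n ≥ 0} (a - b)/((n + a)(n + b))`, the
tail `ψ(a + N) - ψ(b + N)` tending to zero because `ψ` is monotone (log-convexity of `Γ`). The
`n = 0` term is `(a - b)/(ab)`; the remaining terms are compared termwise with
`(a - b)/((n + b)(n + b + 1))` (which telescopes to `(a - b)/(b + 1)`, using `a < b + 1`) from below
and with `(a - b)/n²` (summing to `(a - b) π²/6`) from above. For `a, b > 1/2` the `n = 1` term is
moreover below `(4/9)(a - b)` instead of `a - b`.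
-/

open scoped Real

/-- The digamma function `ψ(x) = Γ'(x)/Γ(x)`. -/
noncomputable def digamma (x : ℝ) : ℝ := deriv Real.Gamma x / Real.Gamma x

open Real Set Filter Topology

lemma hasDerivAt_Gamma_of_pos {x : ℝ} (hx : 0 < x) : HasDerivAt Gamma (deriv Gamma x) x :=
  (differentiableAt_Gamma fun m => by linarith [(m.cast_nonneg : (0 : ℝ) ≤ m)]).hasDerivAt

lemma deriv_Gamma_add_one_of_pos {x : ℝ} (hx : 0 < x) :
    deriv Gamma (x + 1) = Gamma x + x * deriv Gamma x := by
  have hmul : (fun y => Gamma (y + 1)) =ᶠ[𝓝 x] fun y => y * Gamma y := by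
    filter_upwards [eventually_ne_nhds hx.ne'] with y hy using Gamma_add_one hy
  rw [← deriv_comp_add_const, hmul.deriv_eq]
  simpa using ((hasDerivAt_id' x).fun_mul (hasDerivAt_Gamma_of_pos hx)).deriv

lemma digamma_add_one {x : ℝ} (hx : 0 < x) : digamma (x + 1) = digamma x + 1 / x := by
  have hΓ := (Gamma_pos_of_pos hx).ne'
  rw [digamma, digamma, deriv_Gamma_add_one_of_pos hx, Gamma_add_one hx.ne']
  field_simp
  ring

lemma digamma_add_nat {x : ℝ} (hx : 0 < x) (N : ℕ) :
    digamma (x + N) = digamma x + ∑ n ∈ Finset.range N, 1 / (x + n) := by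
  induction N with
  | zero => simp
  | succ N ih =>
    rw [Nat.cast_succ, ← add_assoc, digamma_add_one (by positivity), ih, Finset.sum_range_succ,
      add_assoc]

lemma digamma_add_nat_sub_le {x : ℝ} (hx : 0 < x) (N : ℕ) :
    digamma (x + N) - digamma x ≤ N / x := by
  rw [digamma_add_nat hx, add_sub_cancel_left]
  calc ∑ n ∈ Finset.range N, 1 / (x + n) ≤ (Finset.range N).card • (1 / x) :=
        Finset.sum_le_card_nsmul _ _ _ fun n _ => one_div_le_one_div_of_le hx (by simp)
    _ = N / x := by simp [div_eq_mul_inv]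

lemma hasDerivAt_log_Gamma {x : ℝ} (hx : 0 < x) : HasDerivAt (log ∘ Gamma) (digamma x) x :=
  (hasDerivAt_Gamma_of_pos hx).log (Gamma_pos_of_pos hx).ne'

lemma digamma_monotoneOn : MonotoneOn digamma (Ioi 0) := by
  intro x hx y hy hxy
  have h := convexOn_log_Gamma.monotoneOn_deriv
    (fun z hz => (hasDerivAt_log_Gamma hz).differentiableAt) hx hy hxy
  rwa [(hasDerivAt_log_Gamma hx).deriv, (hasDerivAt_log_Gamma hy).deriv] at h

lemma tendsto_digamma_add_nat_sub_digamma_add_nat {a b : ℝ} (hb : 0 < b) (hba : b ≤ a) :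
    Tendsto (fun N : ℕ => digamma (a + N) - digamma (b + N)) atTop (𝓝 0) := by
  set m := ⌈a - b⌉₊
  have hbN (N : ℕ) : 0 < b + N := by positivity
  have haN (N : ℕ) : b + N ≤ a + N := by linarith
  have hlim : Tendsto (fun N : ℕ => (m : ℝ) / (b + N)) atTop (𝓝 0) :=
    tendsto_const_nhds.div_atTop (tendsto_atTop_add_const_left _ _ tendsto_natCast_atTop_atTop)
  refine squeeze_zero (fun N => ?_) (fun N => ?_) hlim
  · exact sub_nonneg.2 (digamma_monotoneOn (hbN N) ((hbN N).trans_le (haN N)) (haN N))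
  · have hle : a + N ≤ b + N + m := by linarith [Nat.le_ceil (a - b)]
    have := digamma_monotoneOn ((hbN N).trans_le (haN N)) (by simp only [mem_Ioi]; positivity) hle
    linarith [digamma_add_nat_sub_le (hbN N) m]

lemma hasSum_digamma_sub_of_le {a b : ℝ} (hb : 0 < b) (hba : b ≤ a) :
    HasSum (fun n : ℕ => (a - b) / ((n + a) * (n + b))) (digamma a - digamma b) := by
  have ha : 0 < a := hb.trans_le hba
  have hpartial (N : ℕ) : ∑ n ∈ Finset.range N, (a - b) / ((n + a) * (n + b)) =
      (digamma a - digamma b) - (digamma (a + N) - digamma (b + N)) := by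
    have hterm (n : ℕ) : (a - b) / ((n + a) * (n + b)) = 1 / (b + n) - 1 / (a + n) := by
      field_simp
      ring
    simp only [hterm, Finset.sum_sub_distrib, digamma_add_nat ha, digamma_add_nat hb]
    ring
  rw [hasSum_iff_tendsto_nat_of_nonneg (fun n => by
    have := sub_nonneg.2 hba; positivity)]
  simp only [hpartial]
  simpa using tendsto_const_nhds.sub (tendsto_digamma_add_nat_sub_digamma_add_nat hb hba)

lemma hasSum_digamma_sub {a b : ℝ} (ha : 0 < a) (hb : 0 < b) :
    HasSum (fun n : ℕ => (a - b) / ((n + a) * (n + b))) (digamma a - digamma b) := by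
  rcases le_total b a with hba | hab
  · exact hasSum_digamma_sub_of_le hb hba
  · have h := (hasSum_digamma_sub_of_le ha hab).neg
    rw [neg_sub] at h
    refine h.congr_fun fun n => ?_
    rw [← neg_div, neg_sub, mul_comm]

lemma hasSum_one_div_add_mul_add_add_one {c : ℝ} (hc : 0 < c) :
    HasSum (fun n : ℕ => 1 / ((n + c) * (n + c + 1))) (1 / c) := by
  rw [hasSum_iff_tendsto_nat_of_nonneg (fun n => by positivity)]
  have hterm (n : ℕ) : 1 / ((n + c) * (n + c + 1)) = 1 / (n + c) - 1 / ((n + 1 : ℕ) + c) := by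
    push_cast
    field_simp
    ring
  simp only [hterm, Finset.sum_range_sub' (fun n : ℕ => 1 / ((n : ℝ) + c))]
  have hlim : Tendsto (fun N : ℕ => 1 / ((N : ℝ) + c)) atTop (𝓝 0) :=
    tendsto_const_nhds.div_atTop (tendsto_atTop_add_const_right _ _ tendsto_natCast_atTop_atTop)
  simpa using tendsto_const_nhds.sub hlim

lemma hasSum_one_div_nat_add_one_sq : HasSum (fun n : ℕ => 1 / ((n : ℝ) + 1) ^ 2) (π ^ 2 / 6) := by
  simpa using (hasSum_nat_add_iff' 1).mpr hasSum_zeta_two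

lemma hasSum_digamma_sub_tail {a b : ℝ} (ha : 0 < a) (hb : 0 < b) :
    HasSum (fun n : ℕ => (a - b) / ((n + 1 + a) * (n + 1 + b)))
      (digamma a - digamma b - (a - b) / (a * b)) := by
  simpa using (hasSum_nat_add_iff' 1).mpr (hasSum_digamma_sub ha hb)

lemma digamma_sub_lt_of_forall_lt {a b s : ℝ} {d : ℕ → ℝ} (hb : 0 < b) (hba : b < a)
    (hd : ∀ n, 0 < d n) (hlt : ∀ n : ℕ, d n < (n + 1 + a) * (n + 1 + b))
    (hs : HasSum (fun n => 1 / d n) s) :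
    digamma a - digamma b < (a - b) * (1 / (a * b) + s) := by
  have hterm (n : ℕ) : (a - b) / ((n + 1 + a) * (n + 1 + b)) < (a - b) * (1 / d n) := by
    rw [mul_one_div]
    exact div_lt_div_of_pos_left (by linarith) (hd n) (hlt n)
  have := hasSum_lt (fun n => (hterm n).le) (hterm 0)
    (hasSum_digamma_sub_tail (hb.trans hba) hb) (hs.mul_left (a - b))
  rw [mul_add, mul_one_div]
  linarith

lemma lt_digamma_sub_of_forall_lt {a b s : ℝ} {d : ℕ → ℝ} (hb : 0 < b) (hba : b < a)
    (hlt : ∀ n : ℕ, (n + 1 + a) * (n + 1 + b) < d n)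
    (hs : HasSum (fun n => 1 / d n) s) :
    (a - b) * (1 / (a * b) + s) < digamma a - digamma b := by
  have ha : 0 < a := hb.trans hba
  have hterm (n : ℕ) : (a - b) * (1 / d n) < (a - b) / ((n + 1 + a) * (n + 1 + b)) := by
    rw [mul_one_div]
    exact div_lt_div_of_pos_left (by linarith) (by positivity) (hlt n)
  have := hasSum_lt (fun n => (hterm n).le) (hterm 0)
    (hs.mul_left (a - b)) (hasSum_digamma_sub_tail ha hb)
  rw [mul_add, mul_one_div]
  linarith

theorem stmt17 (a b : ℝ) (hb : 0 < b) (hba : b < a) (ha : a ≤ 1) :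
    ((a - b) * (1/(a*b) + 1/(b+1)) < digamma a - digamma b ∧
      digamma a - digamma b < (a - b) * (1/(a*b) + π^2/6)) ∧
    (1/2 < a → 1/2 < b →
      digamma a - digamma b < (a - b) * (1/(a*b) + π^2/6 - 5/9)) := by
  refine ⟨⟨?_, ?_⟩, fun ha2 hb2 => ?_⟩
  · refine lt_digamma_sub_of_forall_lt hb hba (fun n => ?_)
      (hasSum_one_div_add_mul_add_add_one (c := b + 1) (by linarith))
    nlinarith
  · exact digamma_sub_lt_of_forall_lt hb hba (fun n => by positivity) (fun n => by nlinarith)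
      hasSum_one_div_nat_add_one_sq
  · set d : ℕ → ℝ := fun n => if n = 0 then 9 / 4 else (n + 1) ^ 2
    have hs : HasSum (fun n => 1 / d n) (π ^ 2 / 6 - 5 / 9) := by
      have hval : 4 / 9 - 1 / (((0 : ℕ) : ℝ) + 1) ^ 2 + π ^ 2 / 6 = π ^ 2 / 6 - 5 / 9 := by
        norm_num
        ring
      refine hval ▸ (hasSum_one_div_nat_add_one_sq.update 0 (4 / 9)).congr_fun fun n => ?_
      rcases n with _ | n <;> simp [d]
    rw [add_sub_assoc]
    refine digamma_sub_lt_of_forall_lt hb hba (fun n => by positivity) (fun n => ?_) hs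
    rcases n with _ | n
    · norm_num [d]
      nlinarith
    · simp [d]
      nlinarith
end
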